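/- arXiv:2109.13627 — 2 statements merged into one kernel-verified Lean document; each statement's English description precedes it below -/
import Mathlib

section
/- For every n ≥ 5, the signed complete graph (K_n,−) in which all edges are negative satisfies ψ(K_n,−) = 2. Furthermore, for every non-empty (not necessarily maximal) matching M of K_n, the signed graph (K_n − M,−) obtained from (K_n,−) by deleting the edges of M satisfies ψ(K_n − M,−) = 3. -/
open SimpleGraph

/-- A signature on a graph: a symmetric assignment of signs (`1` or `-1`) to pairs of
vertices (only the values on edges are relevant). -/
def IsSignature {V : Type*} (σ : V → V → ℤ) : Prop :=
  (∀ u v, σ u v = σ v u) ∧ (∀ u v, σ u v = 1 ∨ σ u v = -1)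

/-- `σ'` is obtained from `σ` by switching a set of vertices: every vertex gets a
switching value `±1`, and the sign of an edge is multiplied by the values at its ends. -/
def SwitchEquiv {V : Type*} (σ σ' : V → V → ℤ) : Prop :=
  ∃ s : V → ℤ, (∀ v, s v = 1 ∨ s v = -1) ∧ ∀ u v, σ' u v = s u * s v * σ u v

/-- The colour set `M_k`, as a set of integers: `{±1, …, ±n}` if `k = 2n`, and
`{-n, …, -1, 0, 1, …, n}` if `k = 2n+1` (colour `±0` is represented by `0`). -/
def colourSet (k : ℕ) : Set ℤ :=
  if Even k then {i | i ≠ 0 ∧ i.natAbs ≤ k / 2} else {i | i.natAbs ≤ k / 2}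

/-- A proper `k`-colouring of the signed graph `(G, σ)`: colours come from `M_k` and,
for each edge `uv`, `φ u ≠ σ(uv) · φ v`. -/
def IsProperColouring {V : Type*} (G : SimpleGraph V) (σ : V → V → ℤ) (k : ℕ)
    (φ : V → ℤ) : Prop :=
  (∀ v, φ v ∈ colourSet k) ∧ ∀ u v, G.Adj u v → φ u ≠ σ u v * φ v

/-- The sign of an integer for the purpose of switching: `-1` for negative colours,
`1` otherwise. -/
def isgn (x : ℤ) : ℤ := if x < 0 then -1 else 1

/-- The sign of the edge `uv` after switching every vertex whose colour is negative. -/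
def redSign {V : Type*} (σ : V → V → ℤ) (φ : V → ℤ) (u v : V) : ℤ :=
  isgn (φ u) * isgn (φ v) * σ u v

/-- After switching all negatively-coloured vertices and taking absolute values of
colours, there is an edge of `(G, σ)` whose ends get values `i` and `j` and whose
resulting sign is `s`. -/
def HasEdgeType {V : Type*} (G : SimpleGraph V) (σ : V → V → ℤ) (φ : V → ℤ)
    (i j : ℕ) (s : ℤ) : Prop :=
  ∃ u v, G.Adj u v ∧ (φ u).natAbs = i ∧ (φ v).natAbs = j ∧ redSign σ φ u v = s

/-- A complete `k`-colouring of the signed graph `(G, σ)`. -/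
def IsCompleteColouring {V : Type*} (G : SimpleGraph V) (σ : V → V → ℤ) (k : ℕ)
    (φ : V → ℤ) : Prop :=
  IsProperColouring G σ k φ ∧
  (∀ i j : ℕ, (i : ℤ) ∈ colourSet k → (j : ℤ) ∈ colourSet k → i ≠ j →
    HasEdgeType G σ φ i j 1 ∧ HasEdgeType G σ φ i j (-1)) ∧
  (∀ i : ℕ, 1 ≤ i → (i : ℤ) ∈ colourSet k → HasEdgeType G σ φ i i (-1))

/-- Some signed graph equivalent to `(G, σ)` admits a complete `k`-colouring. -/
def AdmitsComplete {V : Type*} (G : SimpleGraph V) (σ : V → V → ℤ) (k : ℕ) : Prop :=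
  ∃ σ', IsSignature σ' ∧ SwitchEquiv σ σ' ∧ ∃ φ, IsCompleteColouring G σ' k φ

/-- The achromatic number of the signed graph `(G, σ)`: the largest `k` such that some
signed graph equivalent to `(G, σ)` admits a complete `k`-colouring. -/
noncomputable def psi {V : Type*} (G : SimpleGraph V) (σ : V → V → ℤ) : ℕ :=
  sSup {k | AdmitsComplete G σ k}

/-- The chromatic number of the signed graph `(G, σ)`: the smallest `k` such that
`(G, σ)` admits a proper `k`-colouring. -/
noncomputable def chi {V : Type*} (G : SimpleGraph V) (σ : V → V → ℤ) : ℕ :=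
  sInf {k | ∃ φ, IsProperColouring G σ k φ}


section Helpers

lemma isgn_cases (x : ℤ) : isgn x = 1 ∨ isgn x = -1 := by
  unfold isgn; split <;> simp

lemma isgn_mul_natAbs (x : ℤ) : isgn x * (x.natAbs : ℤ) = x := by
  unfold isgn; split <;> omega

lemma isgn_of_nonneg {x : ℤ} (h : 0 ≤ x) : isgn x = 1 := by
  unfold isgn; omega

/-- `redSign` in terms of the vertex signs `t v = isgn (φ v) * s v`. -/
lemma red_eq {V : Type*} (σ' : V → V → ℤ) (s : V → ℤ)
    (hσ' : ∀ u v, σ' u v = s u * s v * (-1)) (φ : V → ℤ) (u v : V) :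
    redSign σ' φ u v = -((isgn (φ u) * s u) * (isgn (φ v) * s v)) := by
  unfold redSign; rw [hσ']; ring

lemma hadj_t {V : Type*} (G : SimpleGraph V) (σ' : V → V → ℤ) (s : V → ℤ)
    (hs : ∀ v, s v = 1 ∨ s v = -1)
    (hσ' : ∀ u v, σ' u v = s u * s v * (-1)) (φ : V → ℤ)
    (hprop : ∀ u v, G.Adj u v → φ u ≠ σ' u v * φ v)
    {u v : V} (huv : G.Adj u v) (heq : (φ u).natAbs = (φ v).natAbs) :
    isgn (φ u) * s u = isgn (φ v) * s v := by
  by_contra hne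
  have e_u : (isgn (φ u) * s u) * ((φ u).natAbs : ℤ) = s u * φ u := by
    rw [mul_comm (isgn (φ u)) (s u), mul_assoc, isgn_mul_natAbs]
  have e_v : (isgn (φ v) * s v) * ((φ v).natAbs : ℤ) = s v * φ v := by
    rw [mul_comm (isgn (φ v)) (s v), mul_assoc, isgn_mul_natAbs]
  have htuv : isgn (φ u) * s u = -(isgn (φ v) * s v) := by
    rcases isgn_cases (φ u) with h1 | h1 <;> rcases isgn_cases (φ v) with h2 | h2 <;>
      rcases hs u with h3 | h3 <;> rcases hs v with h4 | h4 <;>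
      rw [h1, h2, h3, h4] at hne ⊢ <;> omega
  have key : s u * φ u = -(s v * φ v) := by
    rw [← e_u, ← e_v, heq, htuv]; ring
  have hsu2 : s u * s u = 1 := by rcases hs u with h | h <;> rw [h] <;> norm_num
  refine hprop u v huv ?_
  rw [hσ']
  calc φ u = s u * (s u * φ u) := by rw [← mul_assoc, hsu2, one_mul]
    _ = s u * (-(s v * φ v)) := by rw [key]
    _ = s u * s v * (-1) * φ v := by ring

/-- If a class `i` contains an actual edge of `G` (from `HasEdgeType i i (-1)`), and the
complement of `G` is a matching, then the vertex sign `t` is constant on the class. -/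
lemma t_const_on_class {V : Type*} (G : SimpleGraph V) (σ' : V → V → ℤ) (s : V → ℤ)
    (hs : ∀ v, s v = 1 ∨ s v = -1)
    (hσ' : ∀ u v, σ' u v = s u * s v * (-1)) (φ : V → ℤ)
    (hprop : ∀ u v, G.Adj u v → φ u ≠ σ' u v * φ v)
    (hmat : ∀ v w w' : V, ¬G.Adj v w → ¬G.Adj v w' → v ≠ w → v ≠ w' → w = w')
    (i : ℕ) (hdg : HasEdgeType G σ' φ i i (-1)) :
    ∀ u v, (φ u).natAbs = i → (φ v).natAbs = i →
      isgn (φ u) * s u = isgn (φ v) * s v := by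
  obtain ⟨w, w', hww', hw, hw', -⟩ := hdg
  have hww : isgn (φ w) * s w = isgn (φ w') * s w' :=
    hadj_t G σ' s hs hσ' φ hprop hww' (hw.trans hw'.symm)
  have hall : ∀ u, (φ u).natAbs = i → isgn (φ u) * s u = isgn (φ w) * s w := by
    intro u hu
    by_contra hne
    have h1 : ¬ G.Adj u w := fun h => hne (hadj_t G σ' s hs hσ' φ hprop h (hu.trans hw.symm))
    have h2 : ¬ G.Adj u w' := fun h =>
      hne ((hadj_t G σ' s hs hσ' φ hprop h (hu.trans hw'.symm)).trans hww.symm)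
    have hnw : u ≠ w := fun h => hne (by rw [h])
    have hnw' : u ≠ w' := fun h => hne (by rw [h, hww])
    exact (G.ne_of_adj hww') (hmat u w w' h1 h2 hnw hnw')
  intro u v hu hv
  exact (hall u hu).trans (hall v hv).symm

lemma pairs_contra {V : Type*} (G : SimpleGraph V) (σ' : V → V → ℤ) (φ t : V → ℤ)
    (hred : ∀ u v, redSign σ' φ u v = -(t u * t v)) (i j : ℕ)
    (hci : ∀ u v, (φ u).natAbs = i → (φ v).natAbs = i → t u = t v)
    (hcj : ∀ u v, (φ u).natAbs = j → (φ v).natAbs = j → t u = t v)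
    (h1 : HasEdgeType G σ' φ i j 1) (h2 : HasEdgeType G σ' φ i j (-1)) : False := by
  obtain ⟨u1, v1, -, hu1, hv1, hr1⟩ := h1
  obtain ⟨u2, v2, -, hu2, hv2, hr2⟩ := h2
  rw [hred] at hr1 hr2
  rw [hci u1 u2 hu1 hu2, hcj v1 v2 hv1 hv2] at hr1
  rw [hr1] at hr2
  norm_num at hr2

lemma mem_colourSet_iff (k : ℕ) (i : ℕ) :
    ((i : ℤ) ∈ colourSet k) ↔ (if Even k then i ≠ 0 ∧ i ≤ k / 2 else i ≤ k / 2) := by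
  unfold colourSet
  split <;> simp

/-- No equivalent signed graph of `(G, -)` has a complete `k`-colouring for `k ≥ 4`,
provided the complement of `G` is a matching. -/
lemma no_ge4 {V : Type*} (G : SimpleGraph V)
    (hmat : ∀ v w w' : V, ¬G.Adj v w → ¬G.Adj v w' → v ≠ w → v ≠ w' → w = w')
    {k : ℕ} (hk : 4 ≤ k) : ¬ AdmitsComplete G (fun _ _ => -1) k := by
  rintro ⟨σ', hsig, ⟨s, hs, hσ'⟩, φ, ⟨⟨hmem, hprop⟩, hpairs, hdiag⟩⟩
  have hσ'' : ∀ u v, σ' u v = s u * s v * (-1) := hσ'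
  have hk2 : 2 ≤ k / 2 := by omega
  have hm1 : ((1 : ℕ) : ℤ) ∈ colourSet k := by
    rw [mem_colourSet_iff]; split <;> omega
  have hm2 : ((2 : ℕ) : ℤ) ∈ colourSet k := by
    rw [mem_colourSet_iff]; split <;> omega
  obtain ⟨h1, h2⟩ := hpairs 1 2 hm1 hm2 (by norm_num)
  exact pairs_contra G σ' φ (fun v => isgn (φ v) * s v)
    (red_eq σ' s hσ'' φ) 1 2
    (t_const_on_class G σ' s hs hσ'' φ hprop hmat 1 (hdiag 1 le_rfl hm1))
    (t_const_on_class G σ' s hs hσ'' φ hprop hmat 2 (hdiag 2 (by norm_num) hm2))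
    h1 h2

lemma no_top3 {n : ℕ} : ¬ AdmitsComplete (⊤ : SimpleGraph (Fin n)) (fun _ _ => -1) 3 := by
  rintro ⟨σ', hsig, ⟨s, hs, hσ'⟩, φ, ⟨⟨hmem, hprop⟩, hpairs, hdiag⟩⟩
  have hσ'' : ∀ u v, σ' u v = s u * s v * (-1) := hσ'
  have hmat : ∀ v w w' : Fin n, ¬(⊤ : SimpleGraph (Fin n)).Adj v w →
      ¬(⊤ : SimpleGraph (Fin n)).Adj v w' → v ≠ w → v ≠ w' → w = w' := by
    intro v w w' h1 _ hvw _
    simp only [top_adj, not_ne_iff] at h1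
    exact absurd h1 hvw
  have hm0 : ((0 : ℕ) : ℤ) ∈ colourSet 3 := by
    rw [mem_colourSet_iff, if_neg (by decide)]; norm_num
  have hm1 : ((1 : ℕ) : ℤ) ∈ colourSet 3 := by
    rw [mem_colourSet_iff, if_neg (by decide)]
  obtain ⟨h1, h2⟩ := hpairs 1 0 hm1 hm0 (by norm_num)
  refine pairs_contra _ σ' φ (fun v => isgn (φ v) * s v)
    (red_eq σ' s hσ'' φ) 1 0
    (t_const_on_class _ σ' s hs hσ'' φ hprop hmat 1 (hdiag 1 le_rfl hm1)) ?_ h1 h2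
  intro u v hu hv
  have huv : u = v := by
    by_contra hne
    have hadj : (⊤ : SimpleGraph (Fin n)).Adj u v := hne
    have hu0 : φ u = 0 := Int.natAbs_eq_zero.mp hu
    have hv0 : φ v = 0 := Int.natAbs_eq_zero.mp hv
    exact hprop u v hadj (by rw [hu0, hv0, mul_zero])
  rw [huv]

lemma admits_top_two {n : ℕ} (hn : 2 ≤ n) :
    AdmitsComplete (⊤ : SimpleGraph (Fin n)) (fun _ _ => -1) 2 := by
  refine ⟨fun _ _ => -1, ⟨fun _ _ => rfl, fun _ _ => Or.inr rfl⟩,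
    ⟨fun _ => 1, fun _ => Or.inl rfl, fun u v => by norm_num⟩,
    fun _ => 1, ⟨⟨?_, ?_⟩, ?_, ?_⟩⟩
  · intro v
    show ((1 : ℕ) : ℤ) ∈ colourSet 2
    rw [mem_colourSet_iff]; norm_num
  · intro u v _; norm_num
  · intro i j hi hj hij
    rw [show ((i : ℤ)) = ((i : ℕ) : ℤ) from rfl, mem_colourSet_iff] at hi
    rw [show ((j : ℤ)) = ((j : ℕ) : ℤ) from rfl, mem_colourSet_iff] at hj
    exfalso
    simp only [Nat.even_iff] at hi hj
    norm_num at hi hj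
    omega
  · intro i hi1 hi
    rw [show ((i : ℤ)) = ((i : ℕ) : ℤ) from rfl, mem_colourSet_iff] at hi
    norm_num at hi
    have : i = 1 := by omega
    subst this
    refine ⟨⟨0, by omega⟩, ⟨1, by omega⟩, ?_, by norm_num, by norm_num, ?_⟩
    · simp only [top_adj]
      exact Fin.ne_of_val_ne (by norm_num)
    · unfold redSign isgn; norm_num

lemma exists_not_mem_of_card_le {n : ℕ} (hn : 5 ≤ n) (S : Finset (Fin n))
    (hS : S.card ≤ 4) : ∃ x, x ∉ S := by
  by_contra h
  push_neg at h
  have hsub : (Finset.univ : Finset (Fin n)) ⊆ S := fun x _ => h x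
  have := Finset.card_le_card hsub
  rw [Finset.card_univ, Fintype.card_fin] at this
  omega

lemma admits_del_three {n : ℕ} (hn : 5 ≤ n) (M : (⊤ : SimpleGraph (Fin n)).Subgraph)
    (hM : M.IsMatching) (hne : M.edgeSet.Nonempty) :
    AdmitsComplete ((⊤ : SimpleGraph (Fin n)).deleteEdges M.edgeSet) (fun _ _ => -1) 3 := by
  obtain ⟨a, b, hab⟩ : ∃ a b, M.Adj a b := by
    obtain ⟨e, he⟩ := hne
    induction e using Sym2.ind with
    | _ a b => exact ⟨a, b, SimpleGraph.Subgraph.mem_edgeSet.mp he⟩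
  have hMu : ∀ {x y z : Fin n}, M.Adj x y → M.Adj x z → y = z :=
    fun h1 h2 => (hM (M.edge_vert h1)).unique h1 h2
  have hab_ne : a ≠ b := (M.adj_sub hab).ne
  obtain ⟨c, hcmem⟩ := exists_not_mem_of_card_le hn {a, b}
    (le_trans (Finset.card_insert_le _ _) (by simp))
  simp only [Finset.mem_insert, Finset.mem_singleton, not_or] at hcmem
  obtain ⟨hca, hcb⟩ := hcmem
  obtain ⟨d, hd, hncd⟩ : ∃ d, (d ≠ a ∧ d ≠ b ∧ d ≠ c) ∧ ¬ M.Adj c d := by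
    by_cases hpc : ∃ x, M.Adj c x
    · obtain ⟨w, hw⟩ := hpc
      obtain ⟨d, hd⟩ := exists_not_mem_of_card_le hn {a, b, c, w} (by
        refine le_trans (Finset.card_insert_le _ _) (Nat.succ_le_succ ?_)
        refine le_trans (Finset.card_insert_le _ _) (Nat.succ_le_succ ?_)
        exact le_trans (Finset.card_insert_le _ _) (by simp))
      simp only [Finset.mem_insert, Finset.mem_singleton, not_or] at hd
      exact ⟨d, ⟨hd.1, hd.2.1, hd.2.2.1⟩, fun h => hd.2.2.2 (hMu h hw)⟩
    · obtain ⟨d, hd⟩ := exists_not_mem_of_card_le hn {a, b, c}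
        (le_trans (Finset.card_insert_le _ _) (Nat.succ_le_succ
          (le_trans (Finset.card_insert_le _ _) (by simp))))
      simp only [Finset.mem_insert, Finset.mem_singleton, not_or] at hd
      exact ⟨d, ⟨hd.1, hd.2.1, hd.2.2⟩, fun h => hpc ⟨d, h⟩⟩
  obtain ⟨hda, hdb, hdc⟩ := hd
  have hnac : ¬ M.Adj a c := fun h => hcb (hMu hab h).symm
  have hnbc : ¬ M.Adj b c := fun h => hca (hMu hab.symm h).symm
  set G := (⊤ : SimpleGraph (Fin n)).deleteEdges M.edgeSet with hG
  have hGadj : ∀ u v : Fin n, u ≠ v → ¬ M.Adj u v → G.Adj u v := by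
    intro u v h1 h2
    rw [hG, SimpleGraph.deleteEdges_adj]
    exact ⟨h1, fun h => h2 (SimpleGraph.Subgraph.mem_edgeSet.mp h)⟩
  set s : Fin n → ℤ := fun v => if v = b then -1 else 1 with hs_def
  set φ : Fin n → ℤ := fun v => if v = a ∨ v = b then 0 else 1 with hφ_def
  have hsval : ∀ v, s v = 1 ∨ s v = -1 := by
    intro v; rw [hs_def]; dsimp only; split <;> simp
  have hsa : s a = 1 := if_neg hab_ne
  have hsb : s b = -1 := if_pos rfl
  have hsc : s c = 1 := if_neg hcb
  have hsd : s d = 1 := if_neg hdb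
  have hφa : φ a = 0 := if_pos (Or.inl rfl)
  have hφb : φ b = 0 := if_pos (Or.inr rfl)
  have hφc : φ c = 1 := if_neg (by tauto)
  have hφd : φ d = 1 := if_neg (by tauto)
  have hφ01 : ∀ v, φ v = 0 ∨ φ v = 1 := by
    intro v; rw [hφ_def]; dsimp only; split <;> simp
  have hisgn : ∀ v, isgn (φ v) = 1 := by
    intro v
    refine isgn_of_nonneg ?_
    rcases hφ01 v with h | h <;> rw [h] <;> norm_num
  have hred : ∀ u v, redSign (fun u v => s u * s v * (-1)) φ u v = s u * s v * (-1) := by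
    intro u v; unfold redSign; rw [hisgn, hisgn]; ring
  have hadj_bc : G.Adj b c := hGadj b c (fun h => hcb h.symm) hnbc
  have hadj_ac : G.Adj a c := hGadj a c (fun h => hca h.symm) hnac
  have hadj_cd : G.Adj c d := hGadj c d (fun h => hdc h.symm) hncd
  have het01p : HasEdgeType G (fun u v => s u * s v * (-1)) φ 0 1 1 :=
    ⟨b, c, hadj_bc, by simp [hφb], by simp [hφc], by rw [hred, hsb, hsc]; norm_num⟩
  have het01n : HasEdgeType G (fun u v => s u * s v * (-1)) φ 0 1 (-1) :=
    ⟨a, c, hadj_ac, by simp [hφa], by simp [hφc], by rw [hred, hsa, hsc]; norm_num⟩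
  have het10p : HasEdgeType G (fun u v => s u * s v * (-1)) φ 1 0 1 :=
    ⟨c, b, hadj_bc.symm, by simp [hφc], by simp [hφb], by rw [hred, hsb, hsc]; ring⟩
  have het10n : HasEdgeType G (fun u v => s u * s v * (-1)) φ 1 0 (-1) :=
    ⟨c, a, hadj_ac.symm, by simp [hφc], by simp [hφa], by rw [hred, hsa, hsc]; ring⟩
  have het11n : HasEdgeType G (fun u v => s u * s v * (-1)) φ 1 1 (-1) :=
    ⟨c, d, hadj_cd, by simp [hφc], by simp [hφd], by rw [hred, hsc, hsd]; ring⟩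
  refine ⟨fun u v => s u * s v * (-1), ⟨fun u v => by ring, fun u v => ?_⟩,
    ⟨s, hsval, fun u v => rfl⟩, φ, ⟨⟨?_, ?_⟩, ?_, ?_⟩⟩
  · show s u * s v * (-1) = 1 ∨ s u * s v * (-1) = -1
    rcases hsval u with h | h <;> rcases hsval v with h' | h' <;> rw [h, h'] <;> norm_num
  · intro v
    unfold colourSet
    rw [if_neg (by decide)]
    rcases hφ01 v with h | h <;> rw [h] <;> simp
  · intro u v huv
    have hune : u ≠ v := huv.ne
    have hnM : ¬ M.Adj u v := by
      rw [hG, SimpleGraph.deleteEdges_adj] at huv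
      exact fun h => huv.2 (SimpleGraph.Subgraph.mem_edgeSet.mpr h)
    show φ u ≠ s u * s v * (-1) * φ v
    by_cases hu : u = a ∨ u = b <;> by_cases hv : v = a ∨ v = b
    · exfalso
      rcases hu with h | h <;> rcases hv with h' | h' <;> subst h <;> subst h'
      exacts [hune rfl, hnM hab, hnM hab.symm, hune rfl]
    · have h0 : φ u = 0 := if_pos hu
      have h1 : φ v = 1 := if_neg hv
      rw [h0, h1]
      rcases hsval u with h | h <;> rcases hsval v with h' | h' <;> rw [h, h'] <;> norm_num
    · have h1 : φ u = 1 := if_neg hu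
      have h0 : φ v = 0 := if_pos hv
      rw [h0, h1]; norm_num
    · push_neg at hu hv
      have h1 : φ u = 1 := if_neg (by tauto)
      have h1' : φ v = 1 := if_neg (by tauto)
      have hsu : s u = 1 := if_neg hu.2
      have hsv2 : s v = 1 := if_neg hv.2
      rw [h1, h1', hsu, hsv2]; norm_num
  · intro i j hi hj hij
    rw [mem_colourSet_iff, if_neg (by decide)] at hi hj
    have hi1 : i ≤ 1 := hi
    have hj1 : j ≤ 1 := hj
    interval_cases i <;> interval_cases j
    · exact absurd rfl hij
    · exact ⟨het01p, het01n⟩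
    · exact ⟨het10p, het10n⟩
    · exact absurd rfl hij
  · intro i hi1 hi
    rw [mem_colourSet_iff, if_neg (by decide)] at hi
    have : i = 1 := by omega
    subst this
    exact het11n

end Helpers

/-- For `n ≥ 5`, the all-negative signed complete graph `(K_n, −)` satisfies
`ψ(K_n, −) = 2`; moreover, for every non-empty matching `M` of `K_n`, the signed graph
`(K_n − M, −)` satisfies `ψ(K_n − M, −) = 3`. -/
theorem statement4 (n : ℕ) (hn : 5 ≤ n) :
    psi (⊤ : SimpleGraph (Fin n)) (fun _ _ => -1) = 2 ∧
    ∀ M : (⊤ : SimpleGraph (Fin n)).Subgraph, M.IsMatching → M.edgeSet.Nonempty →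
      psi ((⊤ : SimpleGraph (Fin n)).deleteEdges M.edgeSet) (fun _ _ => -1) = 3 := by
  constructor
  · apply IsGreatest.csSup_eq
    constructor
    · exact admits_top_two (by omega)
    · intro k hk
      by_contra hk2
      push_neg at hk2
      have hk3 : k = 3 ∨ 4 ≤ k := by omega
      rcases hk3 with rfl | h4
      · exact no_top3 hk
      · refine no_ge4 _ ?_ h4 hk
        intro v w w' h1 _ hvw _
        simp only [top_adj, not_ne_iff] at h1
        exact absurd h1 hvw
  · intro M hM hMne
    apply IsGreatest.csSup_eq
    constructor
    · exact admits_del_three hn M hM hMne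
    · intro k hk
      by_contra hk2
      push_neg at hk2
      refine no_ge4 _ ?_ (show 4 ≤ k by omega) hk
      intro v w w' h1 h2 hvw hvw'
      have e1 : M.Adj v w := by
        simp only [SimpleGraph.deleteEdges_adj, top_adj, not_and, not_not] at h1
        exact SimpleGraph.Subgraph.mem_edgeSet.mp (h1 hvw)
      have e2 : M.Adj v w' := by
        simp only [SimpleGraph.deleteEdges_adj, top_adj, not_and, not_not] at h2
        exact SimpleGraph.Subgraph.mem_edgeSet.mp (h2 hvw')
      exact (hM (M.edge_vert e1)).unique e1 e2
end

section
/- For every k ≥ 3, there exists a signed graph (G,σ) with ψ(G,σ) = k containing a vertex v such that ψ(G−v,σ) = k − 2, where (G−v,σ) is the signed graph obtained by deleting v and restricting σ. (That is, the lower bound ψ(G,σ) − 2 ≤ ψ(G−v,σ) is attained for every k ≥ 3.) -/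
/-!
Encode what a complete `k`-colouring must exhibit by *edge types*: ordered pairs `(i, j)` of
values of `M_k`, not both `0`, the order recording the sign of the edge. There are
`⌈k/2⌉² - (k mod 2)` of them, strictly more for larger `k ≥ 1`, and distinct types need distinct
edges. Hence a signed graph with exactly one edge of each type of `M_k`, coloured by its type,
has `ψ = k`.

Take for `G` such a graph in which the types involving the top value `⌊k/2⌋` form a star
around an apex `v` and the remaining types, which are exactly the types of `M_(k-2)`, form a
matching. Then `G - v` is that matching plus isolated vertices, so `ψ(G - v) = k - 2`.
-/

open SimpleGraph

open Finset Function

section EdgeTypes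

def colourValues (k : ℕ) : Finset ℕ :=
  if Even k then Icc 1 (k / 2) else Icc 0 (k / 2)

variable {k i : ℕ}

lemma mem_colourValues_iff : i ∈ colourValues k ↔ (i : ℤ) ∈ colourSet k := by
  unfold colourValues colourSet
  split_ifs <;>
    simp only [mem_Icc, Set.mem_ofPred_eq, Int.natAbs_natCast, Nat.cast_ne_zero] <;> omega

lemma card_colourValues (k : ℕ) : #(colourValues k) = (k + 1) / 2 := by
  unfold colourValues
  split_ifs with h
  · rw [Nat.card_Icc]; have := Nat.even_iff.1 h; omega
  · rw [Nat.card_Icc]; have := Nat.odd_iff.1 (Nat.not_even_iff_odd.1 h); omega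

lemma le_half_of_mem_colourValues (h : i ∈ colourValues k) : i ≤ k / 2 := by
  unfold colourValues at h
  split_ifs at h <;> exact (mem_Icc.1 h).2

lemma half_mem_colourValues (hk : 1 ≤ k) : k / 2 ∈ colourValues k := by
  unfold colourValues
  split_ifs with h <;> rw [Nat.even_iff] at h <;> simp only [mem_Icc] <;> omega

lemma mem_colourValues_sub_two_iff (hk : 2 ≤ k) :
    i ∈ colourValues (k - 2) ↔ i ∈ colourValues k ∧ i < k / 2 := by
  unfold colourValues
  split_ifs with h1 h2 h2 <;> rw [Nat.even_iff] at * <;> simp <;> omega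

/-- The edge type `(i, j)` stands for a positive edge with colours `i, j` if `i < j`, and for a
negative edge with colours `j, i` if `j ≤ i`: a proper colouring is complete iff it exhibits every
type. The negative `0`-`0` edge is improper, hence not a type. -/
def edgeTypes (k : ℕ) : Finset (ℕ × ℕ) :=
  (colourValues k ×ˢ colourValues k).erase (0, 0)

def edgeSign (p : ℕ × ℕ) : ℤ := if p.1 < p.2 then 1 else -1

variable {p q : ℕ × ℕ}

lemma mem_edgeTypes :
    p ∈ edgeTypes k ↔ p.1 ∈ colourValues k ∧ p.2 ∈ colourValues k ∧ p ≠ (0, 0) := by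
  simp [edgeTypes, and_comm, and_assoc]

lemma card_edgeTypes (k : ℕ) : #(edgeTypes k) = ((k + 1) / 2) ^ 2 - k % 2 := by
  have h00 : (0, 0) ∈ colourValues k ×ˢ colourValues k ↔ k % 2 = 1 := by
    simp [colourValues, Nat.even_iff]; split_ifs <;> simp <;> omega
  unfold edgeTypes
  by_cases h : k % 2 = 1
  · rw [card_erase_of_mem (h00.2 h), card_product, card_colourValues, h]; ring_nf
  · rw [erase_eq_of_notMem (mt h00.1 h), card_product, card_colourValues]; ring_nf; omega

lemma card_edgeTypes_lt {j : ℕ} (hj : 1 ≤ j) (hjk : j < k) :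
    #(edgeTypes j) < #(edgeTypes k) := by
  rw [card_edgeTypes, card_edgeTypes]
  generalize ha : (j + 1) / 2 = a
  generalize hb : (k + 1) / 2 = b
  rcases (show a = b ∨ a + 1 ≤ b by omega) with rfl | hab
  · have : 1 ≤ a ^ 2 := Nat.one_le_pow _ _ (by omega)
    omega
  · have : (a + 1) ^ 2 ≤ b ^ 2 := Nat.pow_le_pow_left hab 2
    have : a ^ 2 + 2 * a + 1 = (a + 1) ^ 2 := by ring
    omega

lemma mem_edgeTypes_sub_two_iff (hk : 2 ≤ k) :
    p ∈ edgeTypes (k - 2) ↔ p ∈ edgeTypes k ∧ p.1 < k / 2 ∧ p.2 < k / 2 := by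
  simp only [mem_edgeTypes, mem_colourValues_sub_two_iff hk]
  tauto

lemma edgeSign_eq_one_or_eq_neg_one (p : ℕ × ℕ) : edgeSign p = 1 ∨ edgeSign p = -1 := by
  unfold edgeSign; split_ifs <;> simp

lemma edgeTypes_sub_two_subset (k : ℕ) : edgeTypes (k - 2) ⊆ edgeTypes k := by
  intro p hp
  rcases lt_or_ge k 2 with hk | hk
  · simp [mem_edgeTypes, colourValues, show k - 2 = 0 by omega] at hp
  · exact ((mem_edgeTypes_sub_two_iff hk).1 hp).1

lemma natCast_ne_edgeSign_mul (hp : p ∈ edgeTypes k) :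
    (p.1 : ℤ) ≠ edgeSign p * p.2 ∧ (p.2 : ℤ) ≠ edgeSign p * p.1 := by
  have : p.1 ≠ 0 ∨ p.2 ≠ 0 := by
    by_contra! h; exact (mem_edgeTypes.1 hp).2.2 (Prod.ext h.1 h.2)
  unfold edgeSign; split_ifs <;> omega

lemma eq_of_edgeSign_eq (h1 : p.1 = q.2) (h2 : p.2 = q.1) (hs : edgeSign p = edgeSign q) :
    p = q := by
  unfold edgeSign at hs
  split_ifs at hs <;> exact Prod.ext (by omega) (by omega)

end EdgeTypes

section CompleteColourings

variable {V : Type*} {G : SimpleGraph V} {σ : V → V → ℤ} {φ : V → ℤ} {k : ℕ}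

lemma redSign_comm (hσ : ∀ u v, σ u v = σ v u) (u v : V) :
    redSign σ φ u v = redSign σ φ v u := by
  unfold redSign; rw [hσ u v]; ring

lemma redSign_natCast (c : V → ℕ) (u v : V) : redSign σ (fun v => (c v : ℤ)) u v = σ u v := by
  have (n : ℕ) : ¬ (n : ℤ) < 0 := by omega
  simp [redSign, isgn, this]

lemma HasEdgeType.swap (hσ : ∀ u v, σ u v = σ v u) {i j : ℕ} {s : ℤ}
    (h : HasEdgeType G σ φ i j s) : HasEdgeType G σ φ j i s := by
  obtain ⟨u, v, huv, hu, hv, hs⟩ := h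
  exact ⟨v, u, huv.symm, hv, hu, redSign_comm hσ u v ▸ hs⟩

theorem isCompleteColouring_iff (hσ : ∀ u v, σ u v = σ v u) :
    IsCompleteColouring G σ k φ ↔
      IsProperColouring G σ k φ ∧ ∀ p ∈ edgeTypes k, HasEdgeType G σ φ p.1 p.2 (edgeSign p) := by
  refine ⟨fun ⟨hprop, hmixed, hloops⟩ => ⟨hprop, fun p hp => ?_⟩,
    fun ⟨hprop, htypes⟩ => ⟨hprop, fun i j hi hj hij => ?_, fun i hi1 hi => ?_⟩⟩
  · obtain ⟨hp1, hp2, hp0⟩ := mem_edgeTypes.1 hp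
    rw [mem_colourValues_iff] at hp1 hp2
    rcases lt_trichotomy p.1 p.2 with hlt | heq | hgt
    · simpa [edgeSign, hlt] using (hmixed _ _ hp1 hp2 hlt.ne).1
    · have : 1 ≤ p.1 := by
        by_contra! h0; exact hp0 (Prod.ext (by omega) (by omega))
      simpa [edgeSign, heq] using hloops _ this hp1
    · simpa [edgeSign, hgt.not_gt] using (hmixed _ _ hp1 hp2 hgt.ne').2
  · have hij' := htypes (i, j) (by simp [mem_edgeTypes, mem_colourValues_iff, *]; omega)
    have hji := (htypes (j, i) (by simp [mem_edgeTypes, mem_colourValues_iff, *]; omega)).swap hσ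
    rcases lt_or_gt_of_ne hij with hlt | hgt
    · simp_all [edgeSign, hlt.not_gt]
    · simp_all [edgeSign, hgt.not_gt]
  · have := htypes (i, i) (by simp [mem_edgeTypes, mem_colourValues_iff, *]; omega)
    simpa [edgeSign] using this

theorem IsCompleteColouring.card_edgeTypes_le (hσ : ∀ u v, σ u v = σ v u)
    (hφ : IsCompleteColouring G σ k φ) (hfin : G.edgeSet.Finite) :
    #(edgeTypes k) ≤ G.edgeSet.ncard := by
  have := hfin.to_subtype
  choose u v hadj hu hv hs using fun p : edgeTypes k => ((isCompleteColouring_iff hσ).1 hφ).2 p p.2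
  have hinj : Injective fun p => (⟨s(u p, v p), hadj p⟩ : G.edgeSet) := by
    intro p q hpq
    rcases Sym2.eq_iff.1 (congrArg Subtype.val hpq) with ⟨h1, h2⟩ | ⟨h1, h2⟩
    · exact Subtype.ext (Prod.ext (by rw [← hu, ← hu, h1]) (by rw [← hv, ← hv, h2]))
    · refine Subtype.ext (eq_of_edgeSign_eq (by rw [← hu, ← hv, h1]) (by rw [← hv, ← hu, h2]) ?_)
      rw [← hs, ← hs, h1, h2, redSign_comm hσ]
  simpa [Nat.card_coe_set_eq] using Nat.card_le_card_of_injective _ hinj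

lemma AdmitsComplete.le {k' : ℕ} (hk : 1 ≤ k) (hfin : G.edgeSet.Finite)
    (hG : G.edgeSet.ncard ≤ #(edgeTypes k)) (h : AdmitsComplete G σ k') : k' ≤ k := by
  obtain ⟨σ', hσ', -, φ', hφ'⟩ := h
  by_contra! hlt
  exact (hφ'.card_edgeTypes_le hσ'.1 hfin).not_gt (hG.trans_lt (card_edgeTypes_lt hk hlt))

lemma psi_eq_of_admitsComplete (h : AdmitsComplete G σ k)
    (hle : ∀ k', AdmitsComplete G σ k' → k' ≤ k) : psi G σ = k :=
  le_antisymm (csSup_le ⟨k, h⟩ hle) (le_csSup ⟨k, hle⟩ h)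

lemma SwitchEquiv.refl (σ : V → V → ℤ) : SwitchEquiv σ σ :=
  ⟨fun _ => 1, fun _ => Or.inl rfl, fun _ _ => by ring⟩

end CompleteColourings

section Realization

variable {V : Type*} {G : SimpleGraph V} {σ : V → V → ℤ} {k : ℕ}

theorem psi_eq_of_edgeTypes_realization (hσ : IsSignature σ) (hk : 1 ≤ k) (c : V → ℕ)
    (hc : ∀ v, (c v : ℤ) ∈ colourSet k) (ends : edgeTypes k → V × V)
    (hends : ∀ p, G.Adj (ends p).1 (ends p).2 ∧ c (ends p).1 = p.1.1 ∧ c (ends p).2 = p.1.2 ∧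
      σ (ends p).1 (ends p).2 = edgeSign p)
    (hedges : G.edgeSet ⊆ Set.range fun p => s((ends p).1, (ends p).2)) :
    psi G σ = k := by
  have hfin : G.edgeSet.Finite := (Set.finite_range _).subset hedges
  have hproper : IsProperColouring G σ k fun v => (c v : ℤ) := by
    refine ⟨hc, fun u v huv => ?_⟩
    obtain ⟨p, hp⟩ := hedges (G.mem_edgeSet.2 huv)
    obtain ⟨-, h1, h2, hs⟩ := hends p
    have hne := natCast_ne_edgeSign_mul p.2
    rcases Sym2.eq_iff.1 hp with ⟨hu, hv⟩ | ⟨hv, hu⟩ <;> simp only [hu, hv] at h1 h2 hs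
    · simpa [← h1, ← h2, hs] using hne.1
    · simpa [← h1, ← h2, hσ.1 u v, hs] using hne.2
  refine psi_eq_of_admitsComplete ⟨σ, hσ, SwitchEquiv.refl σ, _,
    (isCompleteColouring_iff hσ.1).2 ⟨hproper, fun p hp => ?_⟩⟩ fun k' h => h.le hk hfin ?_
  · obtain ⟨hadj, h1, h2, hs⟩ := hends ⟨p, hp⟩
    exact ⟨_, _, hadj, by simp [h1], by simp [h2], by rw [redSign_natCast, hs]⟩
  · calc G.edgeSet.ncard ≤ (Set.range fun p => s((ends p).1, (ends p).2)).ncard :=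
          Set.ncard_le_ncard hedges
      _ ≤ #(edgeTypes k) := by
        simpa [Nat.card_coe_set_eq] using Finite.card_range_le fun p => s((ends p).1, (ends p).2)

end Realization

section Isomorphism

variable {V W : Type*} {G : SimpleGraph V} {H : SimpleGraph W} {σ : V → V → ℤ}
  {τ : W → W → ℤ} {φ : W → ℤ} {k : ℕ}

lemma IsSignature.comap (hσ : IsSignature σ) (f : W → V) :
    IsSignature (σ on f) :=
  ⟨fun _ _ => hσ.1 _ _, fun _ _ => hσ.2 _ _⟩

lemma HasEdgeType.comap (e : G ≃g H) {i j : ℕ} {s : ℤ} (h : HasEdgeType H τ φ i j s) :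
    HasEdgeType G (τ on e) (φ ∘ e) i j s := by
  obtain ⟨u, v, huv, hu, hv, hs⟩ := h
  exact ⟨e.symm u, e.symm v, e.symm.map_adj_iff.2 huv, by simpa using hu, by simpa using hv,
    by simpa [redSign, onFun] using hs⟩

lemma IsCompleteColouring.comap (e : G ≃g H) (h : IsCompleteColouring H τ k φ) :
    IsCompleteColouring G (τ on e) k (φ ∘ e) := by
  obtain ⟨⟨hc, hprop⟩, hmixed, hloops⟩ := h
  exact ⟨⟨fun v => hc (e v), fun u v huv => hprop _ _ (e.map_adj_iff.2 huv)⟩,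
    fun i j hi hj hij => ⟨((hmixed i j hi hj hij).1.comap e), (hmixed i j hi hj hij).2.comap e⟩,
    fun i hi1 hi => (hloops i hi1 hi).comap e⟩

lemma AdmitsComplete.comap (e : G ≃g H) (hστ : ∀ u v, σ u v = τ (e u) (e v))
    (h : AdmitsComplete H τ k) : AdmitsComplete G σ k := by
  obtain ⟨τ', ⟨hsymm, hsign⟩, ⟨s, hs, hswitch⟩, φ, hφ⟩ := h
  exact ⟨τ' on e, ⟨fun u v => hsymm _ _, fun u v => hsign _ _⟩,
    ⟨s ∘ e, fun v => hs _, fun u v => by simp [hswitch, hστ]⟩, φ ∘ e, hφ.comap e⟩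

lemma psi_congr (e : G ≃g H) (hστ : ∀ u v, σ u v = τ (e u) (e v)) : psi G σ = psi H τ := by
  unfold psi
  congr 1
  ext k
  exact ⟨fun h => h.comap e.symm fun u v => by simp [hστ], AdmitsComplete.comap e hστ⟩

end Isomorphism

namespace StarMatching

/-- `none` is the apex; `some (.inl p)` is the vertex carrying the edge of type `p`, matched to
`some (.inr p)` when `p` is an edge type of `M_(k-2)` and joined to the apex otherwise. -/
abbrev Vtx (k : ℕ) := Option (edgeTypes k ⊕ edgeTypes (k - 2))

def ends (k : ℕ) (p : edgeTypes k) : Vtx k × Vtx k :=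
  if h : p.1 ∈ edgeTypes (k - 2) then (some (.inl p), some (.inr ⟨p, h⟩))
  else if p.1.1 = k / 2 then (none, some (.inl p)) else (some (.inl p), none)

def graph (k : ℕ) : SimpleGraph (Vtx k) :=
  fromEdgeSet (Set.range fun p => s((ends k p).1, (ends k p).2))

def sign (k : ℕ) : Vtx k → Vtx k → ℤ
  | some (.inl _), some (.inl _) => 1
  | some (.inl p), _ => edgeSign p
  | _, some (.inl p) => edgeSign p
  | _, _ => 1

def colour (k : ℕ) : Vtx k → ℕ
  | none => k / 2
  | some (.inl p) => if p.1.1 = k / 2 then p.1.2 else p.1.1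
  | some (.inr q) => q.1.2

variable {k : ℕ}

lemma isSignature_sign (k : ℕ) : IsSignature (sign k) := by
  refine ⟨by rintro (_ | _ | _) (_ | _ | _) <;> rfl, ?_⟩
  rintro (_ | _ | _) (_ | _ | _) <;>
    first | exact Or.inl rfl | exact edgeSign_eq_one_or_eq_neg_one _

lemma ends_of_mem {p : edgeTypes k} (h : p.1 ∈ edgeTypes (k - 2)) :
    ends k p = (some (.inl p), some (.inr ⟨p, h⟩)) :=
  dif_pos h

lemma none_mem_ends_of_notMem {p : edgeTypes k} (h : p.1 ∉ edgeTypes (k - 2)) :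
    none ∈ s((ends k p).1, (ends k p).2) := by
  unfold ends; split_ifs <;> simp

lemma adj_ends (p : edgeTypes k) : (graph k).Adj (ends k p).1 (ends k p).2 := by
  refine (fromEdgeSet_adj _).2 ⟨⟨p, rfl⟩, ?_⟩
  unfold ends; split_ifs <;> simp

lemma colour_sign_ends (hk : 2 ≤ k) (p : edgeTypes k) :
    colour k (ends k p).1 = p.1.1 ∧ colour k (ends k p).2 = p.1.2 ∧
      sign k (ends k p).1 (ends k p).2 = edgeSign p := by
  obtain ⟨hp1, hp2, -⟩ := mem_edgeTypes.1 p.2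
  have := le_half_of_mem_colourValues hp1
  have := le_half_of_mem_colourValues hp2
  have hlow := mem_edgeTypes_sub_two_iff (p := p.1) hk
  unfold ends
  split_ifs with h1 h2
  · have := (hlow.1 h1).2
    simp [colour, sign]; omega
  · simp [colour, sign, h2]
  · have : ¬ (p.1.1 < k / 2 ∧ p.1.2 < k / 2) := fun h => h1 (hlow.2 ⟨p.2, h⟩)
    simp [colour, sign, h2]; omega

lemma colour_mem (hk : 2 ≤ k) (v : Vtx k) : (colour k v : ℤ) ∈ colourSet k := by
  rw [← mem_colourValues_iff]
  rcases v with _ | p | q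
  · exact half_mem_colourValues (by omega)
  · obtain ⟨hp1, hp2, -⟩ := mem_edgeTypes.1 p.2
    simp only [colour]; split_ifs <;> assumption
  · exact (mem_edgeTypes.1 (edgeTypes_sub_two_subset k q.2)).2.1

theorem psi_graph (hk : 2 ≤ k) : psi (graph k) (sign k) = k := by
  refine psi_eq_of_edgeTypes_realization (isSignature_sign k) (by omega) (colour k)
    (colour_mem hk) (ends k) (fun p => ⟨adj_ends p, colour_sign_ends hk p⟩) ?_
  rw [graph, edgeSet_fromEdgeSet]
  exact Set.sdiff_subset

def colourOffApex (k : ℕ) : Vtx k → ℕ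
  | some (.inl p) => if p.1 ∈ edgeTypes (k - 2) then p.1.1 else (k - 2) / 2
  | some (.inr q) => q.1.2
  | none => (k - 2) / 2

def endsOffApex (k : ℕ) (q : edgeTypes (k - 2)) :
    {x : Vtx k // x ≠ none} × {x : Vtx k // x ≠ none} :=
  (⟨some (.inl ⟨q, edgeTypes_sub_two_subset k q.2⟩), Option.some_ne_none _⟩,
    ⟨some (.inr q), Option.some_ne_none _⟩)

lemma colourOffApex_mem (hk : 3 ≤ k) (v : Vtx k) :
    (colourOffApex k v : ℤ) ∈ colourSet (k - 2) := by
  rw [← mem_colourValues_iff]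
  have htop := half_mem_colourValues (k := k - 2) (by omega)
  rcases v with _ | p | q
  · exact htop
  · simp only [colourOffApex]; split_ifs with h
    · exact (mem_edgeTypes.1 h).1
    · exact htop
  · exact (mem_edgeTypes.1 q.2).2.1

lemma edgeSet_induce_ne_none_subset :
    ((graph k).induce {x | x ≠ none}).edgeSet ⊆
      Set.range fun q => s((endsOffApex k q).1, (endsOffApex k q).2) := by
  intro e he
  induction e using Sym2.ind with | h u v => ?_
  obtain ⟨⟨p, hp⟩, -⟩ := (fromEdgeSet_adj _).1 (mem_edgeSet _ |>.1 he)
  have hp : s((ends k p).1, (ends k p).2) = s(u.1, v.1) := hp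
  have hlow : p.1 ∈ edgeTypes (k - 2) := by
    by_contra h
    have := hp ▸ none_mem_ends_of_notMem h
    rcases Sym2.mem_iff.1 this with h' | h'
    exacts [u.2 h'.symm, v.2 h'.symm]
  refine ⟨⟨p, hlow⟩, Sym2.map.injective Subtype.val_injective ?_⟩
  simpa [endsOffApex, ends_of_mem hlow] using hp

theorem psi_induce_ne_none (hk : 3 ≤ k) :
    psi ((graph k).induce {x | x ≠ none}) (sign k on Subtype.val) = k - 2 := by
  refine psi_eq_of_edgeTypes_realization ((isSignature_sign k).comap _) (by omega)
    (colourOffApex k ∘ Subtype.val) (fun v => colourOffApex_mem hk v) (endsOffApex k)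
    (fun q => ⟨?_, by simp [endsOffApex, colourOffApex, q.2], rfl, rfl⟩)
    edgeSet_induce_ne_none_subset
  have := adj_ends (k := k) ⟨q, edgeTypes_sub_two_subset k q.2⟩
  rwa [ends_of_mem q.2] at this

end StarMatching

/-- For every `k ≥ 3`, there is a signed graph `(G,σ)` with `ψ(G,σ) = k`
containing a vertex `v` such that `ψ(G − v, σ) = k − 2`. -/
theorem statement8 (k : ℕ) (hk : 3 ≤ k) :
    ∃ (n : ℕ) (G : SimpleGraph (Fin n)) (σ : Fin n → Fin n → ℤ) (v : Fin n),
      IsSignature σ ∧ psi G σ = k ∧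
      psi (G.induce {u | u ≠ v}) (fun a b => σ a.1 b.1) = k - 2 := by
  let e := Fintype.equivFin (StarMatching.Vtx k)
  let φ := Iso.map e (StarMatching.graph k)
  have hbij : Set.BijOn φ {x | x ≠ none} {u | u ≠ e none} := by
    refine ⟨fun x hx => by simpa [φ] using hx, φ.injective.injOn, fun y hy => ⟨e.symm y, ?_, ?_⟩⟩
    · simpa [Equiv.symm_apply_eq] using hy
    · simp [φ]
  refine ⟨_, (StarMatching.graph k).map e, StarMatching.sign k on e.symm, e none,
    (StarMatching.isSignature_sign k).comap _, ?_, ?_⟩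
  · exact (psi_congr φ fun u v => by simp [φ, onFun]).symm.trans
      (StarMatching.psi_graph (by omega))
  · exact (psi_congr (φ.induce hbij) fun u v => by simp [φ, onFun]).symm.trans
      (StarMatching.psi_induce_ne_none hk)
end
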